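/- Let N_k satisfy N_1 = 1, N_2 = 2, N_k = N_{k-1} + (k-1)N_{k-2} for k ≥ 3. Fix k ≥ 3 and define P₀ = 1, P₁ = k-1, P₂ = k-2, and P_j = (P₀ + P₁ + ⋯ + P_{j-2})·(k-j) for j ≥ 3. Then N_k = 2·(P₀ + P₁ + ⋯ + P_{k-3}) + P_{k-2}. -/

import Mathlib

/-!
Unroll the recurrence for `N k` from the top: with `S j = P 0 + ⋯ + P (j - 1)`, one has
`N k = S j * N (k - j) + P j * N (k - j - 1)` for `1 ≤ j ≤ k - 2`. Expanding `N (k - j)` once more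
and using `P (j + 1) = S j * (k - j - 1)` moves this to `j + 1`; at `j = k - 2` the values
`N 2 = 2`, `N 1 = 1` give the formula.
-/

open Finset

section

variable {N P : ℕ → ℕ} {k : ℕ}

theorem succ_eq_sum_range_mul (hP0 : P 0 = 1) (hP2 : P 2 = k - 2)
    (hPrec : ∀ j, 3 ≤ j → P j = (∑ i ∈ range (j - 1), P i) * (k - j))
    {j : ℕ} (hj : 1 ≤ j) : P (j + 1) = (∑ i ∈ range j, P i) * (k - (j + 1)) := by
  obtain rfl | hj2 := hj.eq_or_lt
  · simp [hP0, hP2]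
  · simpa using hPrec (j + 1) (by omega)

theorem eq_sum_range_mul_add_mul (hNrec : ∀ m, 3 ≤ m → N m = N (m - 1) + (m - 1) * N (m - 2))
    (hk : 3 ≤ k) (hP0 : P 0 = 1) (hP1 : P 1 = k - 1)
    (hPsucc : ∀ j, 1 ≤ j → P (j + 1) = (∑ i ∈ range j, P i) * (k - (j + 1)))
    {j : ℕ} (hj : 1 ≤ j) (hjk : j ≤ k - 2) :
    N k = (∑ i ∈ range j, P i) * N (k - j) + P j * N (k - j - 1) := by
  induction j, hj using Nat.le_induction with
  | base => simpa [hP0, hP1, Nat.sub_sub] using hNrec k hk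
  | succ j hj ih =>
    have hNkj := hNrec (k - j) (by omega)
    rw [ih (by omega), hNkj, sum_range_succ, hPsucc j hj,
      show k - (j + 1) = k - j - 1 by omega, show k - j - 2 = k - j - 1 - 1 by omega]
    ring

end

theorem matching_count_closed_form (N : ℕ → ℕ)
    (hN1 : N 1 = 1) (hN2 : N 2 = 2)
    (hNrec : ∀ m, 3 ≤ m → N m = N (m - 1) + (m - 1) * N (m - 2))
    (k : ℕ) (hk : 3 ≤ k) (P : ℕ → ℕ)
    (hP0 : P 0 = 1) (hP1 : P 1 = k - 1) (hP2 : P 2 = k - 2)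
    (hPrec : ∀ j, 3 ≤ j → P j = (∑ i ∈ Finset.range (j - 1), P i) * (k - j)) :
    N k = 2 * (∑ j ∈ Finset.range (k - 2), P j) + P (k - 2) := by
  have h := eq_sum_range_mul_add_mul hNrec hk hP0 hP1
    (fun _ hj ↦ succ_eq_sum_range_mul hP0 hP2 hPrec hj) (j := k - 2) (by omega) le_rfl
  rwa [show k - (k - 2) = 2 by omega, show 2 - 1 = 1 from rfl, hN1, hN2, mul_one, mul_comm] at h
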